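/- (Importance-reweighted statistics are unbiased.) In the setting of the discrete importance-sampling estimator — ν a probability density on ℝ^d, μ ≥ 0 integrable with Z := ∫ μ > 0, forward transition densities p_k with ∫ p_k(x,y) dy = 1, backward transition densities q_k with ∫ q_k(y,x) dx = 1, forward path density p(x_{0:K}) = ν(x_0)·∏_{k=0}^{K-1} p_k(x_k, x_{k+1}), weight Ẑ(x_{0:K}) = μ(x_K)·∏_{k=0}^{K-1} q_k(x_{k+1}, x_k)/p(x_{0:K}), and the support condition that μ(x_K)·∏ q_k(x_{k+1}, x_k) vanishes a.e. where p vanishes — the following holds for every bounded measurable g : ℝ^d → ℝ: ∫ g(x_K)·Ẑ(x_{0:K})·p(x_{0:K}) dx_{0:K} = ∫ g(x)·μ(x) dx. Consequently the self-normalized estimator satisfies (∫ g(x_K)·Ẑ·p dx_{0:K}) / (∫ Ẑ·p dx_{0:K}) = ∫ g d(μ/Z), the expectation of g under the normalized target. -/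

import Mathlib

/-!
Wherever `p` does not vanish the weight `Ẑ` cancels the forward density, and by the support
condition `Ẑ·p = μ(x_K)·∏ₖ q_k(x_{k+1}, x_k)` almost everywhere, so the forward chain drops out.
Integrating out `x₀, x₁, …, x_{K-1}` in turn, each backward kernel `q_k(x_{k+1}, ·)` contributes
a factor `1`, which leaves `∫ g μ`; with `g = 1` this gives the normaliser `Z` of the
self-normalized estimator.
-/

open MeasureTheory Finset

/-- Forward path density `p(x_{0:K}) = ν(x₀)·∏ p_k(x_k, x_{k+1})`. -/
noncomputable def pPath {d K : ℕ} (ν : EuclideanSpace ℝ (Fin d) → ℝ)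
    (p : ℕ → EuclideanSpace ℝ (Fin d) → EuclideanSpace ℝ (Fin d) → ℝ)
    (x : Fin (K + 1) → EuclideanSpace ℝ (Fin d)) : ℝ :=
  ν (x 0) * ∏ k : Fin K, p k (x k.castSucc) (x k.succ)

/-- Importance weight `Ẑ(x_{0:K}) = μ(x_K)·∏ q_k(x_{k+1}, x_k) / p(x_{0:K})`
(set to `0` where `p` vanishes). -/
noncomputable def zHat {d K : ℕ} (ν μ : EuclideanSpace ℝ (Fin d) → ℝ)
    (p q : ℕ → EuclideanSpace ℝ (Fin d) → EuclideanSpace ℝ (Fin d) → ℝ)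
    (x : Fin (K + 1) → EuclideanSpace ℝ (Fin d)) : ℝ :=
  if pPath ν p x = 0 then 0
  else (μ (x (Fin.last K)) * ∏ k : Fin K, q k (x k.succ) (x k.castSucc)) / pPath ν p x

section BackwardChain

variable {α M : Type*}

/-- The density `∏ₖ q_k(x_{k+1}, x_k)` of the backward chain `x_K → x_{K-1} → ⋯ → x₀`. -/
def backwardChain [CommMonoid M] {K : ℕ} (q : ℕ → α → α → M) (x : Fin (K + 1) → α) : M :=
  ∏ k : Fin K, q k (x k.succ) (x k.castSucc)

lemma backwardChain_succ [CommMonoid M] {K : ℕ} (q : ℕ → α → α → M) (x : Fin (K + 2) → α) :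
    backwardChain q x = q 0 (x 1) (x 0) * backwardChain (fun k => q (k + 1)) (Fin.tail x) := by
  simp only [backwardChain, Fin.prod_univ_succ, Fin.tail, Fin.val_succ, ← Fin.succ_castSucc]
  rfl

lemma measurable_backwardChain [MeasurableSpace α] [CommMonoid M] [MeasurableSpace M]
    [MeasurableMul₂ M] {K : ℕ} {q : ℕ → α → α → M}
    (hq : ∀ k, Measurable (Function.uncurry (q k))) :
    Measurable (backwardChain (K := K) q) :=
  Finset.measurable_prod _ fun k _ => (hq k).comp
    (f := fun x : Fin (K + 1) → α => (x k.succ, x k.castSucc)) (by fun_prop)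

lemma backwardChain_nonneg {K : ℕ} {q : ℕ → α → α → ℝ} (hq0 : ∀ k y x, 0 ≤ q k y x)
    (x : Fin (K + 1) → α) : 0 ≤ backwardChain q x :=
  Finset.prod_nonneg fun _ _ => hq0 _ _ _

lemma ofReal_backwardChain {K : ℕ} {q : ℕ → α → α → ℝ} (hq0 : ∀ k y x, 0 ≤ q k y x)
    (x : Fin (K + 1) → α) :
    ENNReal.ofReal (backwardChain q x) = backwardChain (fun k y x => ENNReal.ofReal (q k y x)) x :=
  ENNReal.ofReal_prod_of_nonneg fun _ _ => hq0 _ _ _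

variable [MeasurableSpace α] (m : Measure α) [SigmaFinite m]

theorem lintegral_mul_backwardChain (K : ℕ) (Q : ℕ → α → α → ENNReal)
    (hQm : ∀ k, Measurable (Function.uncurry (Q k)))
    (hQ1 : ∀ k < K, ∀ y, ∫⁻ x, Q k y x ∂m = 1) {h : α → ENNReal} (hh : Measurable h) :
    ∫⁻ x, h (x (Fin.last K)) * backwardChain Q x ∂(Measure.pi fun _ => m) = ∫⁻ y, h y ∂m := by
  induction K generalizing Q with
  | zero =>
    convert (measurePreserving_funUnique m (Fin 1)).lintegral_comp hh using 3 with x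
    simp [backwardChain]
  | succ K ih =>
    set c : (Fin (K + 1) → α) → ENNReal :=
      fun t => h (t (Fin.last K)) * backwardChain (fun k => Q (k + 1)) t
    have hc : Measurable c :=
      (hh.comp (measurable_pi_apply _)).mul (measurable_backwardChain fun k => hQm (k + 1))
    set G : α × (Fin (K + 1) → α) → ENNReal := fun z => Q 0 (z.2 0) z.1 * c z.2
    have hG : Measurable G :=
      ((hQm 0).comp (((measurable_pi_apply 0).comp measurable_snd).prodMk measurable_fst)).mul
        (hc.comp measurable_snd)
    have hsplit : ∀ x : Fin (K + 2) → α, h (x (Fin.last (K + 1))) * backwardChain Q x =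
        G (MeasurableEquiv.piFinSuccAbove (fun _ => α) 0 x) := by
      intro x
      have he : MeasurableEquiv.piFinSuccAbove (fun _ => α) 0 x = (x 0, Fin.tail x) := rfl
      rw [he, backwardChain_succ Q x]
      simp only [G, c, Fin.tail, Fin.succ_last, Fin.succ_zero_eq_one]
      ring
    calc ∫⁻ x, h (x (Fin.last (K + 1))) * backwardChain Q x ∂(Measure.pi fun _ => m)
        = ∫⁻ z, G z ∂(m.prod (Measure.pi fun _ : Fin (K + 1) => m)) := by
          simp_rw [hsplit]
          exact (measurePreserving_piFinSuccAbove (fun _ => m) 0).lintegral_comp hG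
      _ = ∫⁻ t, ∫⁻ a, G (a, t) ∂m ∂(Measure.pi fun _ => m) := lintegral_prod_symm' G hG
      _ = ∫⁻ t, c t ∂(Measure.pi fun _ => m) := by
          refine lintegral_congr fun t => ?_
          have hQt : Measurable (Q 0 (t 0)) := (hQm 0).comp measurable_prodMk_left
          change ∫⁻ a, Q 0 (t 0) a * c t ∂m = c t
          rw [lintegral_mul_const _ hQt, hQ1 0 K.succ_pos, one_mul]
      _ = ∫⁻ y, h y ∂m := ih _ (fun k => hQm (k + 1)) (fun k hk => hQ1 (k + 1) (by omega))

theorem lintegral_ofReal_mul_backwardChain {K : ℕ} {q : ℕ → α → α → ℝ}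
    (hqm : ∀ k, Measurable (Function.uncurry (q k))) (hq0 : ∀ k y x, 0 ≤ q k y x)
    (hq1 : ∀ k < K, ∀ y, ∫ x, q k y x ∂m = 1) {f : α → ℝ} (hf : Measurable f) :
    ∫⁻ x, ENNReal.ofReal (f (x (Fin.last K)) * backwardChain q x) ∂(Measure.pi fun _ => m) =
      ∫⁻ y, ENNReal.ofReal (f y) ∂m := by
  have hQ1 : ∀ k < K, ∀ y, ∫⁻ x, ENNReal.ofReal (q k y x) ∂m = 1 := fun k hk y => by
    rw [← ofReal_integral_eq_lintegral_ofReal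
      (Integrable.of_integral_ne_zero (by rw [hq1 k hk y]; exact one_ne_zero))
      (Filter.Eventually.of_forall (hq0 k y)), hq1 k hk y, ENNReal.ofReal_one]
  simp_rw [ENNReal.ofReal_mul' (backwardChain_nonneg hq0 _), ofReal_backwardChain hq0]
  exact lintegral_mul_backwardChain m K (fun k y x => ENNReal.ofReal (q k y x))
    (fun k => ENNReal.measurable_ofReal.comp (hqm k)) hQ1 (ENNReal.measurable_ofReal.comp hf)

theorem integrable_mul_backwardChain {K : ℕ} {q : ℕ → α → α → ℝ}
    (hqm : ∀ k, Measurable (Function.uncurry (q k))) (hq0 : ∀ k y x, 0 ≤ q k y x)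
    (hq1 : ∀ k < K, ∀ y, ∫ x, q k y x ∂m = 1) {f : α → ℝ} (hf : Integrable f m)
    (hfm : Measurable f) :
    Integrable (fun x => f (x (Fin.last K)) * backwardChain q x) (Measure.pi fun _ => m) := by
  have hFm : Measurable fun x : Fin (K + 1) → α => f (x (Fin.last K)) * backwardChain q x :=
    (hfm.comp (measurable_pi_apply _)).mul (measurable_backwardChain hqm)
  refine ⟨hFm.aestronglyMeasurable, ?_⟩
  simp only [HasFiniteIntegral, Real.enorm_eq_ofReal_abs, abs_mul,
    abs_of_nonneg (backwardChain_nonneg hq0 _)]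
  rw [lintegral_ofReal_mul_backwardChain m hqm hq0 hq1 hfm.abs]
  simpa only [HasFiniteIntegral, Real.enorm_eq_ofReal_abs] using hf.2

theorem integral_mul_backwardChain {K : ℕ} {q : ℕ → α → α → ℝ}
    (hqm : ∀ k, Measurable (Function.uncurry (q k))) (hq0 : ∀ k y x, 0 ≤ q k y x)
    (hq1 : ∀ k < K, ∀ y, ∫ x, q k y x ∂m = 1) {f : α → ℝ} (hf : Integrable f m)
    (hfm : Measurable f) :
    ∫ x, f (x (Fin.last K)) * backwardChain q x ∂(Measure.pi fun _ => m) = ∫ y, f y ∂m := by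
  rw [integral_eq_lintegral_pos_part_sub_lintegral_neg_part
      (integrable_mul_backwardChain m hqm hq0 hq1 hf hfm),
    integral_eq_lintegral_pos_part_sub_lintegral_neg_part hf]
  simp only [← neg_mul]
  rw [lintegral_ofReal_mul_backwardChain m hqm hq0 hq1 hfm,
    lintegral_ofReal_mul_backwardChain m hqm hq0 hq1 (f := fun y => -f y) hfm.neg]

end BackwardChain

lemma zHat_mul_pPath {d K : ℕ} {ν μ : EuclideanSpace ℝ (Fin d) → ℝ}
    {p q : ℕ → EuclideanSpace ℝ (Fin d) → EuclideanSpace ℝ (Fin d) → ℝ}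
    {x : Fin (K + 1) → EuclideanSpace ℝ (Fin d)}
    (hx : pPath ν p x = 0 → μ (x (Fin.last K)) * backwardChain q x = 0) :
    zHat ν μ p q x * pPath ν p x = μ (x (Fin.last K)) * backwardChain q x := by
  by_cases hp : pPath ν p x = 0
  · rw [hp, mul_zero, hx hp]
  · rw [zHat, if_neg hp, div_mul_cancel₀ _ hp, backwardChain]

theorem stmt4 {d K : ℕ}
    (ν μ : EuclideanSpace ℝ (Fin d) → ℝ)
    (hμm : Measurable μ) (hμi : Integrable μ)
    (p q : ℕ → EuclideanSpace ℝ (Fin d) → EuclideanSpace ℝ (Fin d) → ℝ)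
    (hqm : ∀ k, Measurable (Function.uncurry (q k)))
    (hq0 : ∀ k y x, 0 ≤ q k y x)
    (hq1 : ∀ k < K, ∀ y, ∫ x, q k y x = 1)
    (hsupp : ∀ᵐ x ∂(volume : Measure (Fin (K + 1) → EuclideanSpace ℝ (Fin d))),
      pPath ν p x = 0 →
        μ (x (Fin.last K)) * ∏ k : Fin K, q k (x k.succ) (x k.castSucc) = 0)
    (g : EuclideanSpace ℝ (Fin d) → ℝ) (hgm : Measurable g) (C : ℝ) (hgb : ∀ x, |g x| ≤ C) :
    (∫ x : Fin (K + 1) → EuclideanSpace ℝ (Fin d),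
        g (x (Fin.last K)) * zHat ν μ p q x * pPath ν p x) = ∫ y, g y * μ y ∧
    (∫ x : Fin (K + 1) → EuclideanSpace ℝ (Fin d),
        g (x (Fin.last K)) * zHat ν μ p q x * pPath ν p x) /
      (∫ x : Fin (K + 1) → EuclideanSpace ℝ (Fin d), zHat ν μ p q x * pPath ν p x)
      = ∫ y, g y * (μ y / ∫ z, μ z) := by
  have hweight : ∀ᵐ x ∂(volume : Measure (Fin (K + 1) → EuclideanSpace ℝ (Fin d))),
      zHat ν μ p q x * pPath ν p x = μ (x (Fin.last K)) * backwardChain q x := by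
    filter_upwards [hsupp] with x hx
    exact zHat_mul_pPath hx
  have hgμ : Integrable (fun y => g y * μ y) :=
    hμi.bdd_mul hgm.aestronglyMeasurable (Filter.Eventually.of_forall fun y => by simpa using hgb y)
  have hnum : ∫ x, g (x (Fin.last K)) * zHat ν μ p q x * pPath ν p x = ∫ y, g y * μ y := by
    calc ∫ x, g (x (Fin.last K)) * zHat ν μ p q x * pPath ν p x
        = ∫ x, g (x (Fin.last K)) * μ (x (Fin.last K)) * backwardChain q x := by
          refine integral_congr_ae (hweight.mono fun x hx => ?_)
          simp only [mul_assoc, hx]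
      _ = ∫ y, g y * μ y := integral_mul_backwardChain volume hqm hq0 hq1 hgμ (hgm.mul hμm)
  have hden : ∫ x, zHat ν μ p q x * pPath ν p x = ∫ y, μ y :=
    (integral_congr_ae hweight).trans (integral_mul_backwardChain volume hqm hq0 hq1 hμi hμm)
  refine ⟨hnum, ?_⟩
  rw [hnum, hden, ← integral_div]
  simp_rw [mul_div_assoc]
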